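/- Any RAF (X, R, F) that is not itself a CAF possesses a reaction subset R* ⊆ R and species subset X* ⊆ X(R*) \ F such that the subnetwork (X(R*), R*, X(R*) \ X*) with enlarged food set F* = X(R*) \ X* is itself a RAF, and the stoichiometric submatrix S[X*, R*] is square, well-formed, and semipositive. -/

import Mathlib

/-- A reaction network with an F-decomposition of its stoichiometric
coefficients: reactant coefficients `sm` and product coefficients `sp` are
decomposed as `sm = σm + k` (F-reactant part plus F-catalyst part) and
`sp = σp + k`, all nonnegative. -/
structure RNet (X R : Type*) where
  sm : X → R → ℝ
  sp : X → R → ℝ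
  σm : X → R → ℝ
  σp : X → R → ℝ
  k : X → R → ℝ
  σm_nonneg : ∀ x r, 0 ≤ σm x r
  σp_nonneg : ∀ x r, 0 ≤ σp x r
  k_nonneg : ∀ x r, 0 ≤ k x r
  sm_eq : ∀ x r, σm x r + k x r = sm x r
  sp_eq : ∀ x r, σp x r + k x r = sp x r

namespace RNet

variable {X R : Type*} (N : RNet X R)

/-- `x` is a reactant of `r`. -/
def reactant (x : X) (r : R) : Prop := 0 < N.sm x r

/-- `x` is a product of `r`. -/
def product (x : X) (r : R) : Prop := 0 < N.sp x r

/-- `x` is an F-reactant of `r`. -/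
def Freactant (x : X) (r : R) : Prop := 0 < N.σm x r

/-- `x` is an F-product of `r`. -/
def Fproduct (x : X) (r : R) : Prop := 0 < N.σp x r

/-- `x` is an F-catalyst of `r`. -/
def Fcatalyst (x : X) (r : R) : Prop := 0 < N.k x r

/-- `x` is a net-product of `r`. -/
def netProduct (x : X) (r : R) : Prop := N.sm x r < N.sp x r

/-- The support `X(R')` of a set of reactions: all their reactants and
products. -/
def support (R' : Set R) : Set X := {x | ∃ r ∈ R', N.reactant x r ∨ N.product x r}

/-- The subnetwork obtained by restricting to species `X'` and reactions `R'`. -/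
def sub (X' : Set X) (R' : Set R) : RNet X' R' where
  sm := fun x r => N.sm x r
  sp := fun x r => N.sp x r
  σm := fun x r => N.σm x r
  σp := fun x r => N.σp x r
  k := fun x r => N.k x r
  σm_nonneg := fun x r => N.σm_nonneg x r
  σp_nonneg := fun x r => N.σp_nonneg x r
  k_nonneg := fun x r => N.k_nonneg x r
  sm_eq := fun x r => N.sm_eq x r
  sp_eq := fun x r => N.sp_eq x r

end RNet

/-- Reflexively Autocatalytic Food-generated set (RAF): every reaction has an
F-catalyst (R1); every non-food F-catalyst is an F-product-but-not-F-reactant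
of some reaction (R2); and there is a strict partial order under which every
non-food F-reactant of a reaction is an F-product-but-not-F-reactant of a
strictly earlier reaction (R3). -/
def IsRAF {X R : Type*} (N : RNet X R) (F : Set X) : Prop :=
  (∀ r, ∃ x, N.Fcatalyst x r) ∧
  (∀ r x, N.Fcatalyst x r → x ∉ F →
    ∃ r', N.Fproduct x r' ∧ ¬ N.Freactant x r') ∧
  (∃ prec : R → R → Prop, IsStrictOrder R prec ∧
    ∀ r x, N.Freactant x r → x ∉ F →
      ∃ r', prec r' r ∧ N.Fproduct x r' ∧ ¬ N.Freactant x r')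

/-- Constructively Autocatalytic Food-generated set (CAF): every reaction has an
F-catalyst, and there is a strict partial order under which every non-food
reactant (F-reactant or F-catalyst) of a reaction is an
F-product-but-not-F-reactant of a strictly earlier reaction. -/
def IsCAF {X R : Type*} (N : RNet X R) (F : Set X) : Prop :=
  (∀ r, ∃ x, N.Fcatalyst x r) ∧
  (∃ prec : R → R → Prop, IsStrictOrder R prec ∧
    ∀ r x, (N.Freactant x r ∨ N.Fcatalyst x r) → x ∉ F →
      ∃ r', prec r' r ∧ N.Fproduct x r' ∧ ¬ N.Freactant x r')

/-!
Iterating "enable every reaction whose non-food F-inputs are already supplied" from the empty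
set stabilises; if every reaction were reached the levels would order a CAF. So some nonempty
set `B` of reactions is blocked: each `r ∈ B` has a non-food F-input `w r` that only reactions
of `B` produce without consuming it. Ranking reactions along the RAF order and letting `q x` be a
least-rank pure producer of `x`, the map `q ∘ w` sends `B` into itself, hence permutes some
nonempty `C ⊆ B`. Then `R* = C`, `X* = w '' C` is the subRAF: the ranks order R3 for the
enlarged food set, and the weights `ε ^ rank` are semipositive for small `ε`, because a reaction
consuming `m ∈ X*` has larger rank than the producer `q m`.
-/

open Finset Filter Topology

theorem exists_rank_of_isStrictOrder {α : Type*} [Fintype α] (lt : α → α → Prop)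
    [IsStrictOrder α lt] : ∃ h : α → ℕ, ∀ a b, lt a b → h a < h b := by
  classical
  refine ⟨fun b => #(univ.filter (lt · b)), fun a b hab => card_lt_card ?_⟩
  have hsub : univ.filter (lt · a) ⊆ univ.filter (lt · b) := fun c hc => by
    simp only [mem_filter, mem_univ, true_and] at hc ⊢
    exact _root_.trans hc hab
  rw [ssubset_iff_of_subset hsub]
  exact ⟨a, by simpa using hab, by simpa using irrefl a⟩

theorem exists_finset_bijOn_of_mapsTo {α : Type*} [Finite α] {f : α → α} {B : Set α}
    (hB : B.Nonempty) (hf : Set.MapsTo f B B) :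
    ∃ C : Finset α, ↑C ⊆ B ∧ C.Nonempty ∧ Set.BijOn f C C := by
  classical
  -- a minimal nonempty invariant subset `C` of `B` satisfies `f '' C = C`
  obtain ⟨C, -, ⟨hCB, hCne, hCf⟩, hmin⟩ := exists_minimal_le_of_wellFoundedLT
    (fun C : Finset α => ↑C ⊆ B ∧ C.Nonempty ∧ Set.MapsTo f C C) B.toFinite.toFinset
    ⟨by simp, by simpa using hB, by simpa using hf⟩
  have hsub : C.image f ⊆ C := by
    rw [← coe_subset, coe_image]
    exact hCf.image_subset
  have himage : C.image f = C := by
    refine le_antisymm hsub (hmin ⟨(coe_subset.2 hsub).trans hCB, hCne.image f, ?_⟩ hsub)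
    rw [coe_image]
    exact (Set.mapsTo_image f C).mono_left hCf.image_subset
  have hsurj : Set.SurjOn f C C := by simp [Set.SurjOn, ← coe_image, himage]
  exact ⟨C, hCB, hCne, hCf, card_image_iff.1 (by rw [himage]), hsurj⟩

theorem neg_abs_mul_pow_succ_le_mul_pow {c ε : ℝ} {n m : ℕ} (hε₀ : 0 < ε) (hε₁ : ε ≤ 1)
    (h : c < 0 → n < m) : -(|c| * ε ^ (n + 1)) ≤ c * ε ^ m := by
  rcases le_or_gt 0 c with hc | hc
  · have := mul_nonneg hc (pow_pos hε₀ m).le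
    have := mul_nonneg (abs_nonneg c) (pow_pos hε₀ (n + 1)).le
    linarith
  · rw [abs_of_neg hc, neg_mul, neg_neg]
    exact mul_le_mul_of_nonpos_left (pow_le_pow_of_le_one hε₀.le hε₁ (h hc)) hc.le

theorem eventually_pos_sum_mul_pow {ι : Type*} {s : Finset ι} {c : ι → ℝ} {h : ι → ℕ} {p : ι}
    (hp : p ∈ s) (hcp : 0 < c p) (hlt : ∀ r ∈ s, c r < 0 → h p < h r) :
    ∀ᶠ ε in 𝓝[>] (0 : ℝ), 0 < ∑ r ∈ s, c r * ε ^ h r := by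
  classical
  set K := ∑ r ∈ s.erase p, |c r|
  have hsmall : ∀ᶠ ε in 𝓝 (0 : ℝ), ε < 1 ∧ ε * K < c p :=
    (gt_mem_nhds one_pos).and
      ((continuous_mul_const K).continuousAt.eventually_lt continuousAt_const (by simpa))
  filter_upwards [self_mem_nhdsWithin, nhdsWithin_le_nhds hsmall] with ε (hε₀ : 0 < ε) ⟨hε₁, hεK⟩
  have hrest : -(K * ε ^ (h p + 1)) ≤ ∑ r ∈ s.erase p, c r * ε ^ h r := by
    rw [sum_mul, ← sum_neg_distrib]
    exact sum_le_sum fun r hr =>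
      neg_abs_mul_pow_succ_le_mul_pow hε₀ hε₁.le (hlt r (mem_of_mem_erase hr))
  rw [← add_sum_erase s _ hp]
  have : 0 < ε ^ h p * (c p - ε * K) := mul_pos (pow_pos hε₀ _) (by linarith)
  nlinarith [pow_succ ε (h p)]

namespace RNet

variable {X R : Type*} (N : RNet X R)

def Finput (x : X) (r : R) : Prop := N.Freactant x r ∨ N.Fcatalyst x r

def pureFproduct (x : X) (r : R) : Prop := N.Fproduct x r ∧ ¬ N.Freactant x r

variable {N}

theorem Finput.reactant {x : X} {r : R} (h : N.Finput x r) : N.reactant x r := by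
  have := N.sm_eq x r
  have := N.σm_nonneg x r
  have := N.k_nonneg x r
  unfold Finput Freactant Fcatalyst at h
  unfold RNet.reactant
  rcases h with h | h <;> linarith

theorem pureFproduct.product {x : X} {r : R} (h : N.pureFproduct x r) : N.product x r := by
  have := N.sp_eq x r
  have := N.k_nonneg x r
  unfold pureFproduct Fproduct at h
  unfold RNet.product
  linarith

theorem sp_sub_sm_eq (x : X) (r : R) : N.sp x r - N.sm x r = N.σp x r - N.σm x r := by
  linarith [N.sp_eq x r, N.sm_eq x r]

theorem pureFproduct.sp_sub_sm_pos {x : X} {r : R} (h : N.pureFproduct x r) :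
    0 < N.sp x r - N.sm x r := by
  have : N.σm x r ≤ 0 := not_lt.1 h.2
  rw [sp_sub_sm_eq]
  exact sub_pos.2 (this.trans_lt h.1)

theorem freactant_of_sp_sub_sm_neg {x : X} {r : R} (h : N.sp x r - N.sm x r < 0) :
    N.Freactant x r := by
  rw [sp_sub_sm_eq] at h
  unfold Freactant
  linarith [N.σp_nonneg x r]

variable (N) (F : Set X)

def enabledBy (S : Set R) : Set R :=
  {r | ∀ x ∉ F, N.Finput x r → ∃ r' ∈ S, N.pureFproduct x r'}

theorem enabledBy_mono : Monotone (N.enabledBy F) :=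
  fun _ _ hST _ hr x hx hin => (hr x hx hin).imp fun _ ⟨hrS, h⟩ => ⟨hST hrS, h⟩

def enabledIter (n : ℕ) : Set R := (N.enabledBy F)^[n] ∅

theorem enabledIter_mono : Monotone (N.enabledIter F) :=
  (N.enabledBy_mono F).monotone_iterate_of_le_map (Set.empty_subset _)

theorem enabledIter_succ (n : ℕ) :
    N.enabledIter F (n + 1) = N.enabledBy F (N.enabledIter F n) :=
  Function.iterate_succ_apply' _ _ _

theorem isCAF_of_forall_mem_enabledIter (h1 : ∀ r, ∃ x, N.Fcatalyst x r)
    (hall : ∀ r, ∃ n, r ∈ N.enabledIter F n) : IsCAF N F := by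
  classical
  refine ⟨h1, fun a b => Nat.find (hall a) < Nat.find (hall b),
    { irrefl := fun _ => lt_irrefl _, trans := fun _ _ _ => lt_trans }, ?_⟩
  intro r x hin hx
  obtain ⟨n, hn⟩ : ∃ n, Nat.find (hall r) = n + 1 :=
    Nat.exists_eq_succ_of_ne_zero fun h0 => by
      have h := Nat.find_spec (hall r)
      rwa [h0] at h
  have hr := Nat.find_spec (hall r)
  rw [hn, enabledIter_succ] at hr
  obtain ⟨r', hr', hgen⟩ := hr x hx hin
  exact ⟨r', show Nat.find _ < Nat.find _ from hn ▸ Nat.lt_succ_of_le (Nat.find_min' _ hr'), hgen⟩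

theorem exists_enabledBy_enabledIter_eq [Finite R] :
    ∃ n, N.enabledBy F (N.enabledIter F n) = N.enabledIter F n := by
  obtain ⟨n, hn⟩ := WellFoundedGT.monotone_chain_condition ⟨_, N.enabledIter_mono F⟩
  exact ⟨n, (N.enabledIter_succ F n).symm.trans (hn (n + 1) n.le_succ).symm⟩

theorem exists_blocked_of_not_isCAF [Finite R] (h1 : ∀ r, ∃ x, N.Fcatalyst x r)
    (hnCAF : ¬ IsCAF N F) :
    ∃ B : Set R, B.Nonempty ∧
      ∀ r ∈ B, ∃ x ∉ F, N.Finput x r ∧ ∀ r', N.pureFproduct x r' → r' ∈ B := by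
  obtain ⟨n, hn⟩ := N.exists_enabledBy_enabledIter_eq F
  refine ⟨(N.enabledIter F n)ᶜ, ?_, fun r hr => ?_⟩
  · refine Set.nonempty_compl.2 fun huniv => hnCAF ?_
    exact N.isCAF_of_forall_mem_enabledIter F h1 fun r => ⟨n, huniv ▸ Set.mem_univ r⟩
  · rw [Set.mem_compl_iff, ← hn] at hr
    simp only [enabledBy, Set.mem_ofPred_eq, not_forall, not_exists, not_and] at hr
    obtain ⟨x, hx, hin, hgen⟩ := hr
    exact ⟨x, hx, hin, fun r' hr' hmem => hgen r' hmem hr'⟩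

variable {N F}

theorem _root_.IsRAF.exists_rank_pureFproduct [Fintype R] (hRAF : IsRAF N F) :
    ∃ h : R → ℕ, ∀ x ∉ F, (∃ r, N.Finput x r) →
      ∃ p, N.pureFproduct x p ∧ ∀ r, N.Freactant x r → h p < h r := by
  obtain ⟨-, hR2, prec, hord, hR3⟩ := hRAF
  obtain ⟨h, hh⟩ := exists_rank_of_isStrictOrder prec
  refine ⟨h, fun x hx ⟨r, hin⟩ => ?_⟩
  have hprod : {p | N.pureFproduct x p}.Nonempty := by
    rcases hin with hin | hin
    · obtain ⟨p, -, hp⟩ := hR3 r x hin hx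
      exact ⟨p, hp⟩
    · exact hR2 r x hin hx
  -- a producer of least rank precedes the producer that `R3` attaches to any consumer
  obtain ⟨p, hp, hmin⟩ := Set.exists_min_image _ h (Set.toFinite _) hprod
  refine ⟨p, hp, fun r' hr' => ?_⟩
  obtain ⟨p', hp'r', hp'⟩ := hR3 r' x hr' hx
  exact (hmin p' hp').trans_lt (hh p' r' hp'r')

variable (N F) in
structure IsSubRAFWitness (C : Finset R) (Xs : Finset X) (q : X → R) (h : R → ℕ) : Prop where
  notMem_food : ∀ m ∈ Xs, m ∉ F
  bijOn : Set.BijOn q Xs C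
  pureFproduct : ∀ m ∈ Xs, N.pureFproduct m (q m)
  rank_lt : ∀ m ∈ Xs, ∀ r, N.Freactant m r → h (q m) < h r
  exists_finput : ∀ r ∈ C, ∃ m ∈ Xs, N.Finput m r

theorem exists_isSubRAFWitness [Fintype R] (hRAF : IsRAF N F) (hnCAF : ¬ IsCAF N F) :
    ∃ C Xs q h, C.Nonempty ∧ N.IsSubRAFWitness F C Xs q h := by
  classical
  obtain ⟨h, hq⟩ := hRAF.exists_rank_pureFproduct
  obtain ⟨B, hBne, hB⟩ := N.exists_blocked_of_not_isCAF F hRAF.1 hnCAF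
  have : Nonempty R := ⟨hBne.some⟩
  have : Nonempty X := ⟨(hB _ hBne.some_mem).choose⟩
  choose! q hq using hq
  choose! w hw using hB
  have hqw (r : R) (hr : r ∈ B) := hq (w r) (hw r hr).1 ⟨r, (hw r hr).2.1⟩
  -- `q ∘ w` sends a blocked reaction to a producer of its blocking species, again blocked
  obtain ⟨C, hCB, hCne, hbij⟩ := exists_finset_bijOn_of_mapsTo hBne (f := q ∘ w)
    fun r hr => (hw r hr).2.2 _ (hqw r hr).1
  refine ⟨C, C.image w, q, h, hCne, ⟨?_, ?_, ?_, ?_, ?_⟩⟩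
  · exact forall_mem_image.2 fun r hr => (hw r (hCB hr)).1
  · rw [coe_image]
    exact (Set.bijOn_comp_iff hbij.injOn.of_comp).1 hbij
  · exact forall_mem_image.2 fun r hr => (hqw r (hCB hr)).1
  · exact forall_mem_image.2 fun r hr => (hqw r (hCB hr)).2
  · exact fun r hr => ⟨w r, mem_image_of_mem w hr, (hw r (hCB hr)).2.1⟩

namespace IsSubRAFWitness

variable {C : Finset R} {Xs : Finset X} {q : X → R} {h : R → ℕ}

theorem card_eq (hW : N.IsSubRAFWitness F C Xs q h) : Xs.card = C.card :=
  card_nbij q hW.bijOn.mapsTo hW.bijOn.injOn hW.bijOn.surjOn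

theorem mem_support (hW : N.IsSubRAFWitness F C Xs q h) {m : X} (hm : m ∈ Xs) :
    m ∈ N.support C :=
  ⟨q m, hW.bijOn.mapsTo hm, Or.inr (hW.pureFproduct m hm).product⟩

theorem wellFormed (hW : N.IsSubRAFWitness F C Xs q h) (r : R) (hr : r ∈ C) :
    (∃ m ∈ Xs, N.reactant m r) ∧ ∃ n ∈ Xs, N.product n r := by
  obtain ⟨m, hm, hin⟩ := hW.exists_finput r hr
  obtain ⟨n, hn, rfl⟩ := hW.bijOn.surjOn hr
  exact ⟨⟨m, hm, hin.reactant⟩, n, hn, (hW.pureFproduct n hn).product⟩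

theorem isRAF_sub (hW : N.IsSubRAFWitness F C Xs q h) (h1 : ∀ r, ∃ x, N.Fcatalyst x r) :
    IsRAF (N.sub (N.support C) C) {x | (x : X) ∉ Xs} := by
  refine ⟨fun r => ?_, fun r x _ hx => ?_, fun r s => h r < h s,
    { irrefl := fun _ => lt_irrefl _, trans := fun _ _ _ => lt_trans }, fun r x hx hxF => ?_⟩
  · obtain ⟨x, hx⟩ := h1 r
    exact ⟨⟨x, r, r.2, Or.inl (Finput.reactant (Or.inr hx))⟩, hx⟩
  · have hm : (x : X) ∈ Xs := not_not.1 hx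
    exact ⟨⟨q x, hW.bijOn.mapsTo hm⟩, hW.pureFproduct x hm⟩
  · have hm : (x : X) ∈ Xs := not_not.1 hxF
    exact ⟨⟨q x, hW.bijOn.mapsTo hm⟩, hW.rank_lt x hm r hx, hW.pureFproduct x hm⟩

theorem exists_semipositive (hW : N.IsSubRAFWitness F C Xs q h) :
    ∃ v : R → ℝ, (∀ r ∈ C, 0 < v r) ∧
      ∀ m ∈ Xs, 0 < ∑ r ∈ C, (N.sp m r - N.sm m r) * v r := by
  have hpos : ∀ᶠ ε in 𝓝[>] (0 : ℝ),
      ε ∈ Set.Ioi 0 ∧ ∀ m ∈ Xs, 0 < ∑ r ∈ C, (N.sp m r - N.sm m r) * ε ^ h r := by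
    refine eventually_mem_nhdsWithin.and ((eventually_all_finset Xs).2 fun m hm => ?_)
    exact eventually_pos_sum_mul_pow (hW.bijOn.mapsTo hm) (hW.pureFproduct m hm).sp_sub_sm_pos
      fun r _ hr => hW.rank_lt m hm r (freactant_of_sp_sub_sm_neg hr)
  obtain ⟨ε, hε, hsum⟩ := hpos.exists
  exact ⟨fun r => ε ^ h r, fun r _ => pow_pos hε _, hsum⟩

end IsSubRAFWitness

end RNet

theorem stmt18_general {X R : Type*} [Fintype R] (N : RNet X R) (F : Set X)
    (hRAF : IsRAF N F) (hnCAF : ¬ IsCAF N F) :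
    ∃ (Rs : Finset R) (Xs : Finset X),
      Rs.Nonempty ∧
      (∀ x ∈ Xs, x ∈ N.support ↑Rs ∧ x ∉ F) ∧
      IsRAF (N.sub (N.support ↑Rs) ↑Rs)
        {x : ↥(N.support (↑Rs : Set R)) | (x : X) ∉ Xs} ∧
      Xs.card = Rs.card ∧
      (∀ r ∈ Rs, (∃ m ∈ Xs, N.reactant m r) ∧ ∃ n ∈ Xs, N.product n r) ∧
      ∃ v : R → ℝ, (∀ r ∈ Rs, 0 < v r) ∧
        ∀ m ∈ Xs, 0 < ∑ r ∈ Rs, (N.sp m r - N.sm m r) * v r := by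
  obtain ⟨C, Xs, q, h, hCne, hW⟩ := RNet.exists_isSubRAFWitness hRAF hnCAF
  exact ⟨C, Xs, hCne, fun m hm => ⟨hW.mem_support hm, hW.notMem_food m hm⟩,
    hW.isRAF_sub hRAF.1, hW.card_eq, hW.wellFormed, hW.exists_semipositive⟩

/-- Corollary (subRAF): any RAF that is not itself a CAF possesses a reaction
subset `R*` and a species subset `X* ⊆ X(R*) \ F` such that the subnetwork on
`X(R*)` with enlarged food set `F* = X(R*) \ X*` is itself a RAF, and the
stoichiometric submatrix `S[X*, R*]` is square, well-formed and semipositive. -/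
theorem stmt18 {X R : Type*} [Fintype X] [Fintype R] (N : RNet X R) (F : Set X)
    (hRAF : IsRAF N F) (hnCAF : ¬ IsCAF N F) :
    ∃ (Rs : Finset R) (Xs : Finset X),
      Rs.Nonempty ∧
      (∀ x ∈ Xs, x ∈ N.support ↑Rs ∧ x ∉ F) ∧
      IsRAF (N.sub (N.support ↑Rs) ↑Rs)
        {x : ↥(N.support (↑Rs : Set R)) | (x : X) ∉ Xs} ∧
      Xs.card = Rs.card ∧
      (∀ r ∈ Rs, (∃ m ∈ Xs, N.reactant m r) ∧ ∃ n ∈ Xs, N.product n r) ∧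
      ∃ v : R → ℝ, (∀ r ∈ Rs, 0 < v r) ∧
        ∀ m ∈ Xs, 0 < ∑ r ∈ Rs, (N.sp m r - N.sm m r) * v r :=
  stmt18_general N F hRAF hnCAF
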